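/- arXiv:2412.10335 — 2 statements merged into one kernel-verified Lean document; each statement's English description precedes it below -/
import Mathlib

section
/- Let G be a finite simple graph and x, y distinct non-adjacent vertices. No minimal vertex cover of G contains both x and y if and only if no minimal vertex cover of the graph Ĝ obtained from G by adding the edge {x,y} contains both x and y. -/
/-- `X` is a vertex cover of `G`: every edge has an endpoint in `X`. -/
def SimpleGraph.IsVertexCover' {V : Type*} (G : SimpleGraph V) (X : Set V) : Prop :=
  ∀ ⦃u v : V⦄, G.Adj u v → u ∈ X ∨ v ∈ X

/-- `X` is a minimal vertex cover of `G`. -/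
def SimpleGraph.IsMinVertexCover {V : Type*} (G : SimpleGraph V) (X : Set V) : Prop :=
  G.IsVertexCover' X ∧ ∀ Y ⊆ X, G.IsVertexCover' Y → Y = X

/-- An edge `{x,y}` is regular: no minimal vertex cover contains both endpoints. -/
def SimpleGraph.IsRegularEdge {V : Type*} (G : SimpleGraph V) (x y : V) : Prop :=
  ∀ X : Set V, G.IsMinVertexCover X → ¬(x ∈ X ∧ y ∈ X)

/-!
Write `Ĝ = G ⊔ edge x y`. The covers of `Ĝ` are the covers of `G` meeting `{x, y}`.
A minimal cover of `G` through `x` and `y` is therefore a minimal cover of `Ĝ`.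
Conversely, let `X` be a minimal cover of `Ĝ` through `x` and `y`, and `Y ⊆ X` a minimal cover
of `G`. Both `insert x Y` and `insert y Y` cover `Ĝ` inside `X`, so both equal `X`;
as `x ≠ y`, this forces `x, y ∈ Y`.
-/

namespace SimpleGraph

variable {V : Type*} {G H : SimpleGraph V} {X Y : Set V} {x y : V}

lemma IsVertexCover'.mono (hXY : X ⊆ Y) (hX : G.IsVertexCover' X) : G.IsVertexCover' Y :=
  fun _ _ huv => (hX huv).imp (@hXY _) (@hXY _)

lemma IsVertexCover'.anti (hGH : G ≤ H) (hX : H.IsVertexCover' X) : G.IsVertexCover' X :=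
  fun _ _ huv => hX (hGH huv)

lemma isVertexCover'_sup :
    (G ⊔ H).IsVertexCover' X ↔ G.IsVertexCover' X ∧ H.IsVertexCover' X :=
  ⟨fun h => ⟨h.anti le_sup_left, h.anti le_sup_right⟩,
    fun ⟨hG, hH⟩ _ _ huv => huv.elim (fun h => hG h) (fun h => hH h)⟩

lemma isVertexCover'_edge (hxy : x ∈ X ∨ y ∈ X) : (edge x y).IsVertexCover' X := by
  intro u v huv
  rcases ((edge_adj x y u v).1 huv).1 with ⟨rfl, rfl⟩ | ⟨rfl, rfl⟩
  · exact hxy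
  · exact hxy.symm

lemma IsVertexCover'.sup_edge (hX : G.IsVertexCover' X) (hxy : x ∈ X ∨ y ∈ X) :
    (G ⊔ edge x y).IsVertexCover' X :=
  isVertexCover'_sup.2 ⟨hX, isVertexCover'_edge hxy⟩

lemma isMinVertexCover_iff_minimal : G.IsMinVertexCover X ↔ Minimal G.IsVertexCover' X :=
  ⟨fun ⟨hX, hmin⟩ => ⟨hX, fun _ hY hYX => (hmin _ hYX hY).ge⟩,
    fun ⟨hX, hmin⟩ => ⟨hX, fun _ hYX hY => hYX.antisymm (hmin hY hYX)⟩⟩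

lemma IsVertexCover'.exists_isMinVertexCover_subset [Finite V] (hX : G.IsVertexCover' X) :
    ∃ Y ⊆ X, G.IsMinVertexCover Y := by
  simp only [isMinVertexCover_iff_minimal]
  exact exists_minimal_le_of_wellFoundedLT _ X hX

lemma IsMinVertexCover.of_le (hGH : G ≤ H) (hX : G.IsMinVertexCover X)
    (hXH : H.IsVertexCover' X) : H.IsMinVertexCover X :=
  ⟨hXH, fun Y hYX hY => hX.2 Y hYX (hY.anti hGH)⟩

lemma IsMinVertexCover.eq_insert_of_subset (hX : (G ⊔ edge x y).IsMinVertexCover X)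
    (hx : x ∈ X) (hYX : Y ⊆ X) (hY : G.IsVertexCover' Y) : insert x Y = X :=
  hX.2 _ (Set.insert_subset hx hYX)
    ((hY.mono (Set.subset_insert x Y)).sup_edge (Or.inl (Set.mem_insert x Y)))

lemma IsRegularEdge.of_sup_edge (h : (G ⊔ edge x y).IsRegularEdge x y) :
    G.IsRegularEdge x y := fun X hX hxy =>
  h X (hX.of_le le_sup_left (hX.1.sup_edge (Or.inl hxy.1))) hxy

lemma IsRegularEdge.sup_edge [Finite V] (hne : x ≠ y) (h : G.IsRegularEdge x y) :
    (G ⊔ edge x y).IsRegularEdge x y := by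
  rintro X hX ⟨hx, hy⟩
  obtain ⟨Y, hYX, hY⟩ := (hX.1.anti le_sup_left).exists_isMinVertexCover_subset
  have hxY : insert x Y = X := hX.eq_insert_of_subset hx hYX hY.1
  have hyY : insert y Y = X := (edge_comm x y ▸ hX).eq_insert_of_subset hy hYX hY.1
  refine h Y hY ⟨?_, ?_⟩
  · exact (Set.mem_insert_iff.1 (hyY ▸ hx)).resolve_left hne
  · exact (Set.mem_insert_iff.1 (hxY ▸ hy)).resolve_left hne.symm

end SimpleGraph

theorem min_cover_iff_added_edge_general {V : Type*} [Fintype V]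
    (G : SimpleGraph V) (x y : V) (hne : x ≠ y) :
    (∀ X : Set V, G.IsMinVertexCover X → ¬(x ∈ X ∧ y ∈ X)) ↔
      (∀ X : Set V,
        (SimpleGraph.fromEdgeSet (G.edgeSet ∪ {s(x, y)})).IsMinVertexCover X →
          ¬(x ∈ X ∧ y ∈ X)) := by
  rw [SimpleGraph.fromEdgeSet_union, SimpleGraph.fromEdgeSet_edgeSet]
  exact ⟨SimpleGraph.IsRegularEdge.sup_edge hne, SimpleGraph.IsRegularEdge.of_sup_edge⟩

/-- for distinct non-adjacent `x, y`, no minimal vertex cover of `G`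
contains both `x` and `y` iff the same holds for the graph `Ĝ = G + {x,y}`. -/
theorem min_cover_iff_added_edge {V : Type*} [Fintype V]
    (G : SimpleGraph V) (x y : V) (hne : x ≠ y) (hnadj : ¬ G.Adj x y) :
    (∀ X : Set V, G.IsMinVertexCover X → ¬(x ∈ X ∧ y ∈ X)) ↔
      (∀ X : Set V,
        (SimpleGraph.fromEdgeSet (G.edgeSet ∪ {s(x, y)})).IsMinVertexCover X →
          ¬(x ∈ X ∧ y ∈ X)) :=
  min_cover_iff_added_edge_general G x y hne
end

section
/- Let G be a finite simple graph without isolated vertices admitting a perfect matching M such that every edge of M has Property P. Then every minimal vertex cover of G has cardinality exactly |V(G)|/2 (i.e., G is very well-covered). -/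
/-- Property P for an edge `{x,y}` of a simple graph. -/
def SimpleGraph.HasPropertyP {V : Type*} (G : SimpleGraph V) (x y : V) : Prop :=
  ∀ a b : V, G.Adj a x → a ≠ y → G.Adj y b → b ≠ x → a ≠ b ∧ G.Adj a b

theorem Set.two_mul_ncard_eq_of_mem_iff_notMem {α : Type*} [Finite α] (X : Set α) (σ : α ≃ α)
    (hσ : ∀ a, a ∈ X ↔ σ a ∉ X) : 2 * X.ncard = Nat.card α := by
  have hcompl : Xᶜ = σ ⁻¹' X := by
    ext a
    simp [hσ a]
  rw [← Set.ncard_add_ncard_compl X, hcompl,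
    Set.ncard_preimage_of_injective_subset_range σ.injective (by simp)]
  ring

namespace SimpleGraph

variable {V : Type*} {G : SimpleGraph V} {X : Set V}

theorem IsMinVertexCover.exists_adj_notMem (hX : G.IsMinVertexCover X) {v : V} (hv : v ∈ X) :
    ∃ w, G.Adj v w ∧ w ∉ X := by
  by_contra! hnbrs
  have hcover : G.IsVertexCover' (X \ {v}) := by
    intro u w huw
    by_cases hu : u = v
    · subst hu
      exact Or.inr ⟨hnbrs w huw, huw.ne'⟩
    by_cases hw : w = v
    · subst hw
      exact Or.inl ⟨hnbrs u huw.symm, huw.ne⟩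
    rcases hX.1 huw with hu' | hw'
    · exact Or.inl ⟨hu', hu⟩
    · exact Or.inr ⟨hw', hw⟩
  have hv' : v ∈ X \ {v} := (hX.2 _ Set.sdiff_subset hcover).symm ▸ hv
  exact hv'.2 rfl

theorem HasPropertyP.isRegularEdge {x y : V} (hP : G.HasPropertyP x y) : G.IsRegularEdge x y := by
  rintro X hX ⟨hx, hy⟩
  obtain ⟨a, hxa, haX⟩ := hX.exists_adj_notMem hx
  obtain ⟨b, hyb, hbX⟩ := hX.exists_adj_notMem hy
  have hab := (hP a b hxa.symm (ne_of_mem_of_not_mem hy haX).symm hyb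
    (ne_of_mem_of_not_mem hx hbX).symm).2
  exact (hX.1 hab).elim haX hbX

theorem IsMinVertexCover.mem_iff_notMem_of_isRegularEdge (hX : G.IsMinVertexCover X) {x y : V}
    (hxy : G.Adj x y) (hreg : G.IsRegularEdge x y) : x ∈ X ↔ y ∉ X :=
  ⟨fun hx hy => hreg X hX ⟨hx, hy⟩, fun hy => (hX.1 hxy).resolve_right hy⟩

end SimpleGraph

theorem very_well_covered_of_perfect_matching_propertyP_general {V : Type*} [Fintype V]
    (G : SimpleGraph V)
    (t : ℕ) (x y : Fin t → V)
    (hperf : Function.Bijective (fun i : Fin t ⊕ Fin t => Sum.elim x y i))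
    (hedge : ∀ i : Fin t, G.Adj (x i) (y i))
    (hP : ∀ i : Fin t, G.HasPropertyP (x i) (y i)) :
    ∀ X : Set V, G.IsMinVertexCover X → 2 * X.ncard = Fintype.card V := by
  intro X hX
  have hexact (i : Fin t) : x i ∈ X ↔ y i ∉ X :=
    hX.mem_iff_notMem_of_isRegularEdge (hedge i) (hP i).isRegularEdge
  let e := Equiv.ofBijective _ hperf
  let swapEnds : V ≃ V := e.symm.trans ((Equiv.sumComm _ _).trans e)
  rw [Fintype.card_eq_nat_card]
  refine X.two_mul_ncard_eq_of_mem_iff_notMem swapEnds fun v => ?_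
  obtain ⟨s, rfl⟩ := e.surjective v
  have hswap : swapEnds (e s) = e s.swap := by simp [swapEnds]
  rw [hswap]
  rcases s with i | i
  · exact hexact i
  · exact iff_not_comm.mp (hexact i)

/-- a graph without isolated vertices admitting a perfect matching all of
whose edges have Property P is very well-covered: every minimal vertex cover has
cardinality `|V|/2`. -/
theorem very_well_covered_of_perfect_matching_propertyP {V : Type*} [Fintype V]
    (G : SimpleGraph V) (hniso : ∀ v : V, ∃ w : V, G.Adj v w)
    (t : ℕ) (x y : Fin t → V)
    (hperf : Function.Bijective (fun i : Fin t ⊕ Fin t => Sum.elim x y i))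
    (hedge : ∀ i : Fin t, G.Adj (x i) (y i))
    (hP : ∀ i : Fin t, G.HasPropertyP (x i) (y i)) :
    ∀ X : Set V, G.IsMinVertexCover X → 2 * X.ncard = Fintype.card V :=
  very_well_covered_of_perfect_matching_propertyP_general G t x y hperf hedge hP
end
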